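/- arXiv:1707.00165 — 3 statements merged into one kernel-verified Lean document; each statement's English description precedes it below -/
import Mathlib

section
/- In the random permutation model on {1,…,n}: for every 1 ≤ k ≤ n, E[|k·D_k(n) − W_k(n)|] ≤ k + n. -/
open Finset Filter Topology MeasureTheory

/-- `eventA σ j k`: in the random binary search tree built by inserting the keys
`(σ 0 : ℕ) + 1, (σ 1 : ℕ) + 1, …` (so that the keys are `{1, …, n}` and `σ` is the
insertion order), the node labelled `k` lies in the subtree rooted at the node
labelled `j`; equivalently (for `j ≠ k`), `j` occurs before all other elements of
`{min j k, …, max j k}` in the insertion order.  For `j = k` this is the sure event. -/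
def eventA {n : ℕ} (σ : Equiv.Perm (Fin n)) (j k : ℕ) : Prop :=
  ∀ jf mf : Fin n, (jf : ℕ) + 1 = j →
    min j k ≤ (mf : ℕ) + 1 → (mf : ℕ) + 1 ≤ max j k → (mf : ℕ) + 1 ≠ j →
      σ.symm jf < σ.symm mf

/-- `eventB σ j k`: the event `B_{j,k}`, i.e. `A_{j,k-1}` for `j < k`,
`A_{j,k+1}` for `j > k`, and the sure event for `j = k`. -/
def eventB {n : ℕ} (σ : Equiv.Perm (Fin n)) (j k : ℕ) : Prop :=
  if j < k then eventA σ j (k - 1) else if k < j then eventA σ j (k + 1) else True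

open Classical in
/-- probability of an event under the uniform distribution on permutations. -/
noncomputable def probPerm {n : ℕ} (E : Equiv.Perm (Fin n) → Prop) : ℝ :=
  ((Finset.univ.filter fun σ => E σ).card : ℝ) / (Fintype.card (Equiv.Perm (Fin n)) : ℝ)

/-- expectation of a random variable under the uniform distribution on permutations. -/
noncomputable def expPerm {n : ℕ} (X : Equiv.Perm (Fin n) → ℝ) : ℝ :=
  (∑ σ : Equiv.Perm (Fin n), X σ) / (Fintype.card (Equiv.Perm (Fin n)) : ℝ)

/-- variance of a random variable under the uniform distribution on permutations. -/
noncomputable def varPerm {n : ℕ} (X : Equiv.Perm (Fin n) → ℝ) : ℝ :=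
  expPerm fun σ => (X σ - expPerm X) ^ 2

open Classical in
/-- real-valued indicator of a proposition. -/
noncomputable def ind (P : Prop) : ℝ := if P then 1 else 0

/-- `depthD σ k = D_k(n)`, the depth of the node labelled `k`. -/
noncomputable def depthD {n : ℕ} (σ : Equiv.Perm (Fin n)) (k : ℕ) : ℝ :=
  (∑ j : Fin n, ind (eventA σ ((j : ℕ) + 1) k)) - 1

/-- `weightW σ k = W_k(n)`, the weighted depth of the node labelled `k`. -/
noncomputable def weightW {n : ℕ} (σ : Equiv.Perm (Fin n)) (k : ℕ) : ℝ :=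
  ∑ j : Fin n, ((j : ℕ) + 1 : ℝ) * ind (eventA σ ((j : ℕ) + 1) k)

/-- `barW σ k = \bar W_k(n) = Σ_{j=1}^n j · 1_{B_{j,k}}`. -/
noncomputable def barW {n : ℕ} (σ : Equiv.Perm (Fin n)) (k : ℕ) : ℝ :=
  ∑ j : Fin n, ((j : ℕ) + 1 : ℝ) * ind (eventB σ ((j : ℕ) + 1) k)

/-- first-order harmonic number `H^{(1)}_m = Σ_{j=1}^m 1/j`. -/
noncomputable def H1 (m : ℕ) : ℝ := ∑ j ∈ Finset.range m, (1 : ℝ) / (j + 1)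

/-- second-order harmonic number `H^{(2)}_m = Σ_{j=1}^m 1/j²`. -/
noncomputable def H2 (m : ℕ) : ℝ := ∑ j ∈ Finset.range m, (1 : ℝ) / (j + 1) ^ 2
/-!
Writing `kD_k - W_k = ∑_j (k - j) 1_{A_{j,k}} - k`, it suffices that `|k - j| P(A_{j,k}) ≤ 1`.
The event `A_{j,k}` says that `j` comes first, in the insertion order, among the `|k - j| + 1`
keys between `j` and `k`; swapping two of these keys is a bijection of permutations, so each
of them is first with the same probability, and `P(A_{j,k}) = 1 / (|k - j| + 1)`.
-/

namespace Equiv.Perm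

variable {α : Type*} [Fintype α] [DecidableEq α] [LinearOrder α]

/-- Reading `σ` as the sequence `σ 0, σ 1, …`, `σ.symm a` is the position of `a`. -/
def firstAmong (S : Finset α) (a : α) : Finset (Perm α) :=
  univ.filter fun σ => ∀ m ∈ S, m ≠ a → σ.symm a < σ.symm m

variable {S : Finset α} {a b : α} {σ : Perm α}

theorem mem_firstAmong : σ ∈ firstAmong S a ↔ ∀ m ∈ S, m ≠ a → σ.symm a < σ.symm m := by
  simp [firstAmong]

theorem swap_mul_mem_firstAmong (hb : b ∈ S) (hσ : σ ∈ firstAmong S a) :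
    swap a b * σ ∈ firstAmong S b := by
  rw [mem_firstAmong] at hσ ⊢
  intro m hm hmb
  change σ.symm (swap a b b) < σ.symm (swap a b m)
  rw [swap_apply_right]
  by_cases hma : m = a
  · subst hma
    rw [swap_apply_left]
    exact hσ b hb (Ne.symm hmb)
  · rw [swap_apply_of_ne_of_ne hma hmb]
    exact hσ m hm hma

theorem card_firstAmong_eq (ha : a ∈ S) (hb : b ∈ S) :
    #(firstAmong S a) = #(firstAmong S b) :=
  card_nbij' (swap a b * ·) (swap a b * ·) (fun _ hσ => swap_mul_mem_firstAmong hb hσ)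
    (fun _ hσ => swap_comm a b ▸ swap_mul_mem_firstAmong ha hσ)
    (fun σ _ => swap_mul_self_mul a b σ) (fun σ _ => swap_mul_self_mul a b σ)

theorem pairwiseDisjoint_firstAmong : (S : Set α).PairwiseDisjoint (firstAmong S) := by
  intro a ha b hb hab
  refine disjoint_left.mpr fun σ hσa hσb => ?_
  rw [mem_firstAmong] at hσa hσb
  exact (hσa b hb hab.symm).asymm (hσb a ha hab)

theorem biUnion_firstAmong (hS : S.Nonempty) : S.biUnion (firstAmong S) = univ := by
  refine eq_univ_of_forall fun σ => mem_biUnion.mpr ?_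
  obtain ⟨a, ha, hmin⟩ := S.exists_min_image σ.symm hS
  exact ⟨a, ha, mem_firstAmong.mpr fun m hm hma =>
    (hmin m hm).lt_of_ne (σ.symm.injective.ne hma.symm)⟩

theorem card_mul_card_firstAmong (ha : a ∈ S) :
    #S * #(firstAmong S a) = Fintype.card (Perm α) := by
  rw [← card_univ, ← biUnion_firstAmong ⟨a, ha⟩, card_biUnion pairwiseDisjoint_firstAmong,
    sum_congr rfl fun b hb => card_firstAmong_eq hb ha, sum_const, smul_eq_mul]

end Equiv.Perm

open Equiv.Perm

section UniformPerm

variable {n : ℕ}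

theorem probPerm_mem {F : Finset (Equiv.Perm (Fin n))} :
    probPerm (· ∈ F) = #F / Fintype.card (Equiv.Perm (Fin n)) := by
  unfold probPerm
  congr
  ext σ
  simp

theorem probPerm_firstAmong {S : Finset (Fin n)} {a : Fin n} (ha : a ∈ S) :
    probPerm (· ∈ firstAmong S a) = (#S : ℝ)⁻¹ := by
  have hF : #(firstAmong S a) ≠ 0 := by
    intro h
    have := card_mul_card_firstAmong ha
    rw [h, mul_zero] at this
    exact Fintype.card_ne_zero this.symm
  rw [probPerm_mem, ← card_mul_card_firstAmong ha, Nat.cast_mul,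
    div_mul_cancel_right₀ (Nat.cast_ne_zero.mpr hF)]

theorem eventA_iff_mem_firstAmong (σ : Equiv.Perm (Fin n)) (j k : Fin n) :
    eventA σ (j + 1) (k + 1) ↔ σ ∈ firstAmong (Icc (min j k) (max j k)) j := by
  simp only [eventA, mem_firstAmong, mem_Icc, Fin.le_def, Fin.coe_min, Fin.coe_max, ne_eq,
    Fin.ext_iff]
  constructor
  · rintro h m ⟨hlo, hhi⟩ hmj
    exact h j m rfl (by omega) (by omega) (by omega)
  · rintro h j' m hj' hlo hhi hmj
    obtain rfl : j' = j := Fin.ext (by omega)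
    exact h m ⟨by omega, by omega⟩ (by omega)

theorem probPerm_eventA (j k : Fin n) :
    probPerm (fun σ : Equiv.Perm (Fin n) => eventA σ (j + 1) (k + 1)) =
      (|(k : ℝ) - j| + 1)⁻¹ := by
  simp only [eventA_iff_mem_firstAmong]
  rw [probPerm_firstAmong (mem_Icc.mpr ⟨min_le_left j k, le_max_left j k⟩), Fin.card_Icc]
  congr 1
  rcases le_total j k with h | h
  · rw [max_eq_right h, min_eq_left h, Nat.cast_sub (by omega), abs_of_nonneg (by simpa using h)]
    push_cast
    ring
  · rw [max_eq_left h, min_eq_right h, Nat.cast_sub (by omega), abs_of_nonpos (by simpa using h)]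
    push_cast
    ring


theorem expPerm_mono {X Y : Equiv.Perm (Fin n) → ℝ} (h : ∀ σ, X σ ≤ Y σ) :
    expPerm X ≤ expPerm Y :=
  div_le_div_of_nonneg_right (sum_le_sum fun σ _ => h σ) (Nat.cast_nonneg _)

theorem expPerm_add (X Y : Equiv.Perm (Fin n) → ℝ) :
    expPerm (fun σ => X σ + Y σ) = expPerm X + expPerm Y := by
  simp only [expPerm, sum_add_distrib, add_div]

theorem expPerm_const (c : ℝ) : expPerm (fun _ : Equiv.Perm (Fin n) => c) = c := by
  rw [expPerm, sum_const, card_univ, nsmul_eq_mul,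
    mul_div_cancel_left₀ _ (Nat.cast_ne_zero.mpr Fintype.card_ne_zero)]

theorem expPerm_sum {ι : Type*} (s : Finset ι) (X : ι → Equiv.Perm (Fin n) → ℝ) :
    expPerm (fun σ => ∑ i ∈ s, X i σ) = ∑ i ∈ s, expPerm (X i) := by
  simp only [expPerm, sum_comm (s := univ), sum_div]

theorem expPerm_const_mul_ind (c : ℝ) (E : Equiv.Perm (Fin n) → Prop) :
    expPerm (fun σ => c * ind (E σ)) = c * probPerm E := by
  simp only [expPerm, probPerm, ind, mul_ite, mul_one, mul_zero, sum_ite, sum_const_zero,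
    add_zero, sum_const, nsmul_eq_mul]
  ring

theorem mul_depthD_sub_weightW (σ : Equiv.Perm (Fin n)) (k : ℕ) :
    k * depthD σ k - weightW σ k =
      ∑ j : Fin n, ((k : ℝ) - (j + 1)) * ind (eventA σ (j + 1) k) - k := by
  simp only [depthD, weightW, mul_sub, mul_sum, sub_mul, sum_sub_distrib]
  ring

theorem ind_nonneg (P : Prop) : 0 ≤ ind P := by
  unfold ind
  split <;> norm_num

theorem abs_mul_depthD_sub_weightW_le (σ : Equiv.Perm (Fin n)) (k : ℕ) :
    |k * depthD σ k - weightW σ k| ≤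
      ∑ j : Fin n, |(k : ℝ) - (j + 1)| * ind (eventA σ (j + 1) k) + k := by
  rw [mul_depthD_sub_weightW]
  calc _ ≤ |∑ j : Fin n, ((k : ℝ) - (j + 1)) * ind (eventA σ (j + 1) k)| + |(k : ℝ)| :=
        abs_sub _ _
    _ ≤ _ := by
        rw [Nat.abs_cast]
        gcongr
        refine (abs_sum_le_sum_abs _ _).trans_eq (sum_congr rfl fun j _ => ?_)
        rw [abs_mul, abs_of_nonneg (ind_nonneg _)]

end UniformPerm

/-- In the random permutation model on `{1,…,n}`: for every `1 ≤ k ≤ n`,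
`E[|k·D_k(n) − W_k(n)|] ≤ k + n`. -/
theorem expectation_abs_kD_sub_W_le (n k : ℕ) (hk1 : 1 ≤ k) (hk2 : k ≤ n) :
    expPerm (fun σ : Equiv.Perm (Fin n) => |(k : ℝ) * depthD σ k - weightW σ k|)
      ≤ (k : ℝ) + n := by
  obtain ⟨k, rfl⟩ : ∃ k' : Fin n, (k' : ℕ) + 1 = k := ⟨⟨k - 1, by omega⟩, Nat.sub_add_cancel hk1⟩
  calc _ ≤ expPerm (fun σ => ∑ j : Fin n, |((k + 1 : ℕ) : ℝ) - (j + 1)| *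
              ind (eventA σ (j + 1) (k + 1)) + ((k + 1 : ℕ) : ℝ)) :=
        expPerm_mono fun σ => abs_mul_depthD_sub_weightW_le σ _
    _ = ∑ j : Fin n, |(k : ℝ) - j| * (|(k : ℝ) - j| + 1)⁻¹ + ((k + 1 : ℕ) : ℝ) := by
        simp only [expPerm_add, expPerm_sum, expPerm_const_mul_ind, probPerm_eventA,
          expPerm_const]
        push_cast
        simp only [add_sub_add_right_eq_sub]
    _ ≤ ∑ _j : Fin n, (1 : ℝ) + ((k + 1 : ℕ) : ℝ) := by
        gcongr with j
        rw [← div_eq_mul_inv, div_le_one (by positivity)]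
        linarith
    _ = _ := by simp [add_comm]
end

section
/- In the random permutation model on {1,…,n}: for every 1 ≤ k ≤ n and every 1 ≤ ℓ ≤ n−k, the probability that the subtree rooted at the node labelled k contains at least ℓ nodes with labels strictly larger than k equals 1/(ℓ+1). That is, with T^>_k(n) := #{m : k < m ≤ n, node m lies in the subtree rooted at node k}, one has P(T^>_k(n) ≥ ℓ) = 1/(ℓ+1). -/
open Finset Filter Topology MeasureTheory

/-!
For `m > k`, node `m` lies in the subtree of `k` iff `k` is inserted before every other key
of `{k, …, m}`. So these `m` form an initial segment `{k + 1, …, k + t}` of the keys above `k`,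
and `T^>_k(n) ≥ ℓ` iff `k` comes first among the `ℓ + 1` keys `{k, …, k + ℓ}`. Exactly one key of a
set comes first, and swapping two keys in the insertion order exchanges which of them does, so
each of the `ℓ + 1` keys comes first with probability `1 / (ℓ + 1)`.
-/

namespace Equiv.Perm

variable {α : Type*} [LinearOrder α]

def IsFirstIn (σ : Perm α) (S : Finset α) (a : α) : Prop :=
  ∀ x ∈ S, x ≠ a → σ.symm a < σ.symm x

theorem IsFirstIn.mono {σ : Perm α} {S T : Finset α} {a : α} (h : σ.IsFirstIn S a)
    (hTS : T ⊆ S) : σ.IsFirstIn T a :=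
  fun x hx => h x (hTS hx)

theorem IsFirstIn.swap_mul {σ : Perm α} {S : Finset α} {a b : α} (h : σ.IsFirstIn S a)
    (hb : b ∈ S) : (swap a b * σ).IsFirstIn S b := by
  intro x hx hxb
  simp only [IsFirstIn, mul_def, symm_trans_apply, symm_swap,
    swap_apply_right] at h ⊢
  by_cases hxa : x = a
  · subst hxa
    rw [swap_apply_left]
    exact h b hb (Ne.symm hxb)
  · rw [swap_apply_of_ne_of_ne hxa hxb]
    exact h x hx hxa

theorem existsUnique_isFirstIn (σ : Perm α) {S : Finset α} (hS : S.Nonempty) :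
    ∃! a, a ∈ S ∧ σ.IsFirstIn S a := by
  obtain ⟨a, haS, hmin⟩ := S.exists_min_image σ.symm hS
  refine ⟨a, ⟨haS, fun x hx hxa => (hmin x hx).lt_of_ne (σ.symm.injective.ne hxa.symm)⟩, ?_⟩
  rintro b ⟨hbS, hb⟩
  by_contra hba
  exact (hb a haS (Ne.symm hba)).not_ge (hmin b hbS)

variable [Fintype α]

open Classical in
theorem card_isFirstIn_eq {S : Finset α} {a b : α} (ha : a ∈ S) (hb : b ∈ S) :
    #{σ : Perm α | σ.IsFirstIn S a} = #{σ : Perm α | σ.IsFirstIn S b} := by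
  refine card_bij' (fun σ _ => swap a b * σ) (fun σ _ => swap a b * σ) ?_ ?_ ?_ ?_
  · intro σ hσ
    simp only [mem_filter, mem_univ, true_and] at hσ ⊢
    exact hσ.swap_mul hb
  · intro σ hσ
    simp only [mem_filter, mem_univ, true_and] at hσ ⊢
    rw [swap_comm]
    exact hσ.swap_mul ha
  all_goals intro σ _; rw [← mul_assoc, swap_mul_self, one_mul]

open Classical in
theorem card_isFirstIn_mul_card {S : Finset α} {a : α} (ha : a ∈ S) :
    #{σ : Perm α | σ.IsFirstIn S a} * #S = Fintype.card (Perm α) := by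
  have hfirst (σ : Perm α) : #{b ∈ S | σ.IsFirstIn S b} = 1 := by
    obtain ⟨c, hc, hcu⟩ := existsUnique_isFirstIn σ ⟨a, ha⟩
    refine card_eq_one.2 ⟨c, ?_⟩
    ext b
    simp only [mem_filter, mem_singleton]
    exact ⟨hcu b, fun h => h ▸ hc⟩
  calc #{σ : Perm α | σ.IsFirstIn S a} * #S
      = ∑ b ∈ S, #{σ : Perm α | σ.IsFirstIn S b} := by
        rw [sum_const_nat fun b hb => card_isFirstIn_eq hb ha, mul_comm]
    _ = ∑ σ : Perm α, #{b ∈ S | σ.IsFirstIn S b} := by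
        simpa only [bipartiteAbove, bipartiteBelow] using
          sum_card_bipartiteAbove_eq_sum_card_bipartiteBelow (s := S) (t := univ)
            (r := fun b (σ : Perm α) => σ.IsFirstIn S b)
    _ = Fintype.card (Perm α) := by simp only [hfirst, sum_const, card_univ, smul_eq_mul, mul_one]

end Equiv.Perm

open Equiv.Perm

theorem probPerm_isFirstIn {n : ℕ} {S : Finset (Fin n)} {a : Fin n} (ha : a ∈ S) :
    probPerm (fun σ => σ.IsFirstIn S a) = 1 / #S := by
  have hS : (#S : ℝ) ≠ 0 := by exact_mod_cast (card_pos.2 ⟨a, ha⟩).ne'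
  rw [probPerm, div_eq_div_iff (by positivity) hS, one_mul, ← card_isFirstIn_mul_card ha]
  push_cast
  rfl

/-- The nodes with keys in `{j, …, m}`; the key of `x : Fin n` is `x + 1`. -/
def labelsIcc (n j m : ℕ) : Finset (Fin n) :=
  {x | j ≤ (x : ℕ) + 1 ∧ (x : ℕ) + 1 ≤ m}

theorem labelsIcc_subset_labelsIcc {n j j' m m' : ℕ} (hj : j' ≤ j) (hm : m ≤ m') :
    labelsIcc n j m ⊆ labelsIcc n j' m' := by
  intro x
  simp only [labelsIcc, mem_filter, mem_univ, true_and]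
  omega

theorem card_labelsIcc {n j m : ℕ} (hj : 1 ≤ j) (hm : m ≤ n) :
    #(labelsIcc n j m) = m + 1 - j := by
  have hval : (labelsIcc n j m).map Fin.valEmbedding = Ico (j - 1) m := by
    ext x
    simp only [labelsIcc, Finset.mem_map, mem_filter, mem_univ, true_and,
      Fin.valEmbedding_apply, mem_Ico]
    constructor
    · rintro ⟨y, hy, rfl⟩
      omega
    · intro hx
      exact ⟨⟨x, by omega⟩, by simp only; omega, rfl⟩
  rw [← card_map Fin.valEmbedding, hval, Nat.card_Ico]
  omega

theorem eventA_iff_isFirstIn {n : ℕ} (σ : Equiv.Perm (Fin n)) (a : Fin n) (m : ℕ) :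
    eventA σ ((a : ℕ) + 1) m ↔
      σ.IsFirstIn (labelsIcc n (min ((a : ℕ) + 1) m) (max ((a : ℕ) + 1) m)) a := by
  simp only [eventA, IsFirstIn, labelsIcc, mem_filter, mem_univ, true_and, ne_eq, ← Fin.val_inj]
  constructor
  · intro h x hx hxa
    exact h a x rfl hx.1 hx.2 (by omega)
  · intro h b x hb hmin hmax hxa
    obtain rfl : b = a := Fin.ext (by omega)
    exact h x ⟨hmin, hmax⟩ (by omega)

open Classical in
/-- `#(subtreeAbove σ k)` is `T^>_k(n)`. -/
noncomputable def subtreeAbove {n : ℕ} (σ : Equiv.Perm (Fin n)) (k : ℕ) : Finset (Fin n) :=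
  {m | k < (m : ℕ) + 1 ∧ eventA σ k ((m : ℕ) + 1)}

theorem le_card_subtreeAbove_iff {n ℓ : ℕ} (σ : Equiv.Perm (Fin n)) (a : Fin n) (hℓ : 1 ≤ ℓ)
    (hn : (a : ℕ) + 1 + ℓ ≤ n) :
    ℓ ≤ #(subtreeAbove σ ((a : ℕ) + 1)) ↔
      σ.IsFirstIn (labelsIcc n ((a : ℕ) + 1) ((a : ℕ) + 1 + ℓ)) a := by
  set k := (a : ℕ) + 1
  constructor
  · intro hcard
    obtain ⟨m, hm, hmℓ⟩ : ∃ m ∈ subtreeAbove σ k, k + ℓ ≤ (m : ℕ) + 1 := by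
      by_contra! hsmall
      have hsub : subtreeAbove σ k ⊆ labelsIcc n (k + 1) (k + ℓ - 1) := by
        intro m hm
        have hmℓ := hsmall m hm
        simp only [subtreeAbove, labelsIcc, mem_filter, mem_univ, true_and] at hm ⊢
        omega
      have hle := (card_le_card hsub).trans_eq (card_labelsIcc (by omega) (by omega))
      omega
    simp only [subtreeAbove, mem_filter, mem_univ, true_and] at hm
    rw [eventA_iff_isFirstIn, min_eq_left hm.1.le, max_eq_right hm.1.le] at hm
    exact hm.2.mono (labelsIcc_subset_labelsIcc le_rfl hmℓ)
  · intro hfirst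
    have hsub : labelsIcc n (k + 1) (k + ℓ) ⊆ subtreeAbove σ k := by
      intro m hm
      simp only [subtreeAbove, labelsIcc, mem_filter, mem_univ, true_and] at hm ⊢
      refine ⟨by omega, ?_⟩
      rw [eventA_iff_isFirstIn, min_eq_left (by omega), max_eq_right (by omega)]
      exact hfirst.mono (labelsIcc_subset_labelsIcc le_rfl hm.2)
    calc ℓ = #(labelsIcc n (k + 1) (k + ℓ)) := by rw [card_labelsIcc (by omega) hn]; omega
      _ ≤ _ := card_le_card hsub

open Classical in
theorem prob_subtree_larger_labels_general (n k ℓ : ℕ) (hk1 : 1 ≤ k)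
    (hl1 : 1 ≤ ℓ) (hl2 : ℓ ≤ n - k) :
    probPerm (fun σ : Equiv.Perm (Fin n) =>
        ℓ ≤ (Finset.univ.filter fun m : Fin n =>
              k < (m : ℕ) + 1 ∧ eventA σ k ((m : ℕ) + 1)).card)
      = 1 / ((ℓ : ℝ) + 1) := by
  obtain ⟨a, rfl⟩ : ∃ a : Fin n, (a : ℕ) + 1 = k := ⟨⟨k - 1, by omega⟩, Nat.sub_add_cancel hk1⟩
  have hn : (a : ℕ) + 1 + ℓ ≤ n := by omega
  have ha : a ∈ labelsIcc n ((a : ℕ) + 1) ((a : ℕ) + 1 + ℓ) := by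
    simp only [labelsIcc, mem_filter, mem_univ, true_and]
    omega
  change probPerm (fun σ => ℓ ≤ #(subtreeAbove σ ((a : ℕ) + 1))) = _
  simp_rw [le_card_subtreeAbove_iff _ a hl1 hn]
  rw [probPerm_isFirstIn ha, card_labelsIcc le_add_self hn,
    show (a : ℕ) + 1 + ℓ + 1 - ((a : ℕ) + 1) = ℓ + 1 by omega]
  push_cast
  rfl

open Classical in
/-- In the random permutation model on `{1,…,n}`: for every `1 ≤ k ≤ n`
and every `1 ≤ ℓ ≤ n−k`, with `T^>_k(n)` the number of nodes with labels strictly larger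
than `k` in the subtree rooted at the node labelled `k`, one has `P(T^>_k(n) ≥ ℓ) = 1/(ℓ+1)`. -/
theorem prob_subtree_larger_labels (n k ℓ : ℕ) (hk1 : 1 ≤ k) (hk2 : k ≤ n)
    (hl1 : 1 ≤ ℓ) (hl2 : ℓ ≤ n - k) :
    probPerm (fun σ : Equiv.Perm (Fin n) =>
        ℓ ≤ (Finset.univ.filter fun m : Fin n =>
              k < (m : ℕ) + 1 ∧ eventA σ k ((m : ℕ) + 1)).card)
      = 1 / ((ℓ : ℝ) + 1) :=
  prob_subtree_larger_labels_general n k ℓ hk1 hl1 hl2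
end

section
/- (Reflection identities.) Let u_1,…,u_n be pairwise distinct reals in (0,1), let T be the binary search tree built by successively inserting u_1,…,u_n, and let T* be the binary search tree built by successively inserting 1−u_1,…,1−u_n. Then 𝐩(T) + 𝐩(T*) = p(T) + n and 𝐰(T) + 𝐰(T*) = w(T) + n(n+1)/2. -/
open Finset Filter Topology MeasureTheory

/-- finite rooted binary trees with real labels. -/
inductive BTree where
  | leaf : BTree
  | node : BTree → ℝ → BTree → BTree

namespace BTree

/-- number of nodes. -/
def size : BTree → ℕ
  | leaf => 0
  | node l _ r => size l + size r + 1

/-- the positions (root-to-node direction words, `false` = left) of all nodes. -/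
def positions : BTree → List (List Bool)
  | leaf => []
  | node l _ r => [] :: ((positions l).map (false :: ·) ++ (positions r).map (true :: ·))

/-- the label at a given position (junk value `0` outside of the tree). -/
noncomputable def labelAt : BTree → List Bool → ℝ
  | leaf, _ => 0
  | node _ x _, [] => x
  | node l _ _, false :: p => labelAt l p
  | node _ _ r, true :: p => labelAt r p

/-- weighted depth of the node at position `p`: the sum of all labels on the path
from the root to the node, endpoints included. -/
noncomputable def wdepth (t : BTree) (p : List Bool) : ℝ :=
  ∑ i ∈ Finset.range (p.length + 1), labelAt t (p.take i)

/-- weighted path length `𝐩(T)`: the sum of the weighted depths of all nodes. -/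
noncomputable def wpl (t : BTree) : ℝ := ((positions t).map (wdepth t)).sum

/-- longest common prefix of two positions (the position of the lowest common ancestor). -/
def commonPrefix : List Bool → List Bool → List Bool
  | a :: p, b :: q => if a = b then a :: commonPrefix p q else []
  | _, _ => []

/-- weighted distance between the nodes at positions `p` and `q`: the sum of all
labels on the path connecting them, endpoints included (for `p = q` it is the label at `p`). -/
noncomputable def wdist (t : BTree) (p q : List Bool) : ℝ :=
  wdepth t p + wdepth t q - 2 * wdepth t (commonPrefix p q) + labelAt t (commonPrefix p q)

/-- weighted Wiener index `𝐰(T)`: the sum of the weighted distances over all unordered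
pairs of nodes, pairs of a node with itself included. -/
noncomputable def wWiener (t : BTree) : ℝ :=
  (((positions t).map fun p => ((positions t).map fun q => wdist t p q).sum).sum
    + ((positions t).map fun p => wdist t p p).sum) / 2

/-- (unweighted) path length `p(T)`: the sum of the depths of all nodes. -/
noncomputable def pl (t : BTree) : ℝ := ((positions t).map fun p => (p.length : ℝ)).sum

/-- graph distance between the nodes at positions `p` and `q`. -/
noncomputable def gdist (p q : List Bool) : ℝ :=
  (p.length : ℝ) + (q.length : ℝ) - 2 * ((commonPrefix p q).length : ℝ)

/-- (unweighted) Wiener index `w(T)`: the sum of the graph distances over all unordered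
pairs of distinct nodes. -/
noncomputable def wiener (t : BTree) : ℝ :=
  (((positions t).map fun p => ((positions t).map fun q => gdist p q).sum).sum) / 2

/-- binary search tree insertion: go left at a node whose label is at least the key,
right otherwise. -/
noncomputable def insertBST : BTree → ℝ → BTree
  | leaf, y => node leaf y leaf
  | node l x r, y => if y ≤ x then node (insertBST l y) x r else node l x (insertBST r y)

/-- the binary search tree built by successively inserting the elements of a list. -/
noncomputable def bstOfList (l : List ℝ) : BTree := l.foldl insertBST leaf

/-- the subtree rooted at a given position. -/
def subtreeAt : BTree → List Bool → BTree
  | t, [] => t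
  | leaf, _ :: _ => leaf
  | node l _ _, false :: p => subtreeAt l p
  | node _ _ r, true :: p => subtreeAt r p

/-- height of a tree: the maximal depth of its nodes (measured from its root). -/
def heightT (t : BTree) : ℕ := ((positions t).map List.length).foldr max 0

/-- the list of all labels of a tree. -/
noncomputable def labels : BTree → List ℝ
  | leaf => []
  | node l x r => x :: (labels l ++ labels r)

/-- the largest label occurring in a tree (junk value `0` for the empty tree). -/
noncomputable def maxLabel (t : BTree) : ℝ := (labels t).foldr max 0

/-- the positions of the external nodes, in left-to-right (depth first search) order. -/
def extList : BTree → List (List Bool)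
  | leaf => [[]]
  | node l _ r => (extList l).map (false :: ·) ++ (extList r).map (true :: ·)

/-- weighted depth of an external node at position `p`: the sum of the labels of the
internal nodes on the path from the root to it. -/
noncomputable def wdepthExt (t : BTree) (p : List Bool) : ℝ :=
  ∑ i ∈ Finset.range p.length, labelAt t (p.take i)

end BTree

/-!
Reflecting every label `x ↦ 1 - x` reverses all comparisons between distinct keys, so the
search tree of `1 - u_1, …, 1 - u_n` is the mirror image of the tree `T` of `u_1, …, u_n`
with each label `x` replaced by `1 - x`. Hence a path of `k` nodes in `T` has weight `w` if
and only if its mirror path has weight `k - w`: the weighted depth of a node at depth `d` and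
its mirror add up to `d + 1`, and the weighted distances of a pair of nodes at graph distance
`d` and of the mirror pair add up to `d + 1`. Summing over all nodes, respectively all pairs,
gives both identities.
-/

namespace BTree

def mirror : BTree → BTree
  | leaf => leaf
  | node l x r => node (mirror r) (1 - x) (mirror l)

theorem mem_labels_insertBST {x y : ℝ} {t : BTree} :
    x ∈ labels (insertBST t y) ↔ x = y ∨ x ∈ labels t := by
  induction t with
  | leaf => simp [insertBST, labels]
  | node l a r ihl ihr =>
    by_cases hya : y ≤ a <;> simp [insertBST, hya, labels, ihl, ihr] <;> tauto

/-- Ties go left, so a key equal to a label would be reflected to the wrong side. -/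
theorem insertBST_mirror {y : ℝ} {t : BTree} (hy : y ∉ labels t) :
    insertBST (mirror t) (1 - y) = mirror (insertBST t y) := by
  induction t with
  | leaf => simp [insertBST, mirror]
  | node l a r ihl ihr =>
    simp only [labels, List.mem_cons, List.mem_append, not_or] at hy
    obtain ⟨hya, hl, hr⟩ := hy
    by_cases hle : y ≤ a
    · have hlt : ¬ 1 - y ≤ 1 - a := by
        have := lt_of_le_of_ne hle hya
        linarith
      simp [insertBST, mirror, hle, hlt, ihl hl]
    · have hle' : 1 - y ≤ 1 - a := by linarith
      simp [insertBST, mirror, hle, hle', ihr hr]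

theorem foldl_insertBST_mirror :
    ∀ (l : List ℝ) (t : BTree), l.Nodup → (∀ x ∈ l, x ∉ labels t) →
      (l.map fun y => 1 - y).foldl insertBST (mirror t) = mirror (l.foldl insertBST t)
  | [], _, _, _ => rfl
  | y :: l, t, hnd, hfresh => by
    rw [List.map_cons, List.foldl_cons, List.foldl_cons,
      insertBST_mirror (hfresh y List.mem_cons_self)]
    refine foldl_insertBST_mirror l _ hnd.of_cons fun x hx hins => ?_
    rcases mem_labels_insertBST.1 hins with rfl | hxt
    · exact (List.nodup_cons.1 hnd).1 hx
    · exact hfresh x (List.mem_cons_of_mem _ hx) hxt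

theorem bstOfList_map_one_sub {u : List ℝ} (hu : u.Nodup) :
    bstOfList (u.map fun y => 1 - y) = mirror (bstOfList u) :=
  foldl_insertBST_mirror u leaf hu fun _ _ => List.not_mem_nil

theorem size_insertBST (t : BTree) (y : ℝ) : size (insertBST t y) = size t + 1 := by
  induction t with
  | leaf => rfl
  | node l a r ihl ihr =>
    by_cases h : y ≤ a <;> simp [insertBST, h, size, ihl, ihr] <;> omega

theorem size_foldl_insertBST :
    ∀ (l : List ℝ) (t : BTree), size (l.foldl insertBST t) = size t + l.length
  | [], _ => rfl
  | y :: l, t => by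
    rw [List.foldl_cons, size_foldl_insertBST l, size_insertBST, List.length_cons]
    omega

theorem size_bstOfList (u : List ℝ) : size (bstOfList u) = u.length := by
  simp [bstOfList, size_foldl_insertBST, size]

theorem length_positions (t : BTree) : (positions t).length = size t := by
  induction t with
  | leaf => rfl
  | node l a r ihl ihr => simp [positions, size, ihl, ihr]

theorem mem_positions_of_prefix {t : BTree} {p q : List Bool} (hp : p ∈ positions t)
    (hq : q <+: p) : q ∈ positions t := by
  induction t generalizing p q with
  | leaf => simp [positions] at hp
  | node l a r ihl ihr =>
    simp only [positions, List.mem_cons, List.mem_append, List.mem_map] at hp ⊢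
    rcases q with _ | ⟨b, q⟩
    · exact Or.inl rfl
    rcases hp with rfl | ⟨p, hp, rfl⟩ | ⟨p, hp, rfl⟩
    · exact absurd hq (by simp)
    · obtain ⟨rfl, hqp⟩ := List.cons_prefix_cons.1 hq
      exact Or.inr (Or.inl ⟨q, ihl hp hqp, rfl⟩)
    · obtain ⟨rfl, hqp⟩ := List.cons_prefix_cons.1 hq
      exact Or.inr (Or.inr ⟨q, ihr hp hqp, rfl⟩)

theorem positions_mirror_perm (t : BTree) :
    (positions (mirror t)).Perm ((positions t).map (List.map not)) := by
  induction t with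
  | leaf => rfl
  | node l a r ihl ihr =>
    simp only [mirror, positions, List.map_cons, List.map_nil, List.map_append, List.map_map]
    refine List.Perm.cons _ ((List.Perm.append (ihr.map _) (ihl.map _)).trans ?_)
    simpa [List.map_map, Function.comp_def] using List.perm_append_comm

theorem sum_map_positions_mirror {M : Type*} [AddCommMonoid M] (t : BTree)
    (f : List Bool → M) :
    ((positions (mirror t)).map f).sum = ((positions t).map fun p => f (p.map not)).sum := by
  rw [((positions_mirror_perm t).map f).sum_eq, List.map_map]
  rfl

theorem labelAt_mirror {t : BTree} {p : List Bool} (hp : p ∈ positions t) :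
    labelAt (mirror t) (p.map not) = 1 - labelAt t p := by
  induction t generalizing p with
  | leaf => simp [positions] at hp
  | node l a r ihl ihr =>
    simp only [positions, List.mem_cons, List.mem_append, List.mem_map] at hp
    rcases hp with rfl | ⟨q, hq, rfl⟩ | ⟨q, hq, rfl⟩
    · simp [mirror, labelAt]
    · simpa [mirror, labelAt] using ihl hq
    · simpa [mirror, labelAt] using ihr hq

theorem commonPrefix_prefix_left : ∀ p q : List Bool, commonPrefix p q <+: p
  | [], _ => List.prefix_refl _
  | _ :: _, [] => List.nil_prefix
  | a :: p, b :: q => by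
    by_cases h : a = b
    · simpa [commonPrefix, h] using commonPrefix_prefix_left p q
    · simp [commonPrefix, h]

theorem commonPrefix_self : ∀ p : List Bool, commonPrefix p p = p
  | [] => rfl
  | a :: p => by simp [commonPrefix, commonPrefix_self p]

theorem commonPrefix_map_not : ∀ p q : List Bool,
    commonPrefix (p.map not) (q.map not) = (commonPrefix p q).map not
  | [], _ => rfl
  | _ :: _, [] => rfl
  | a :: p, b :: q => by
    by_cases h : a = b
    · simp [commonPrefix, h, commonPrefix_map_not p q]
    · simp [commonPrefix, h]

theorem gdist_self (p : List Bool) : gdist p p = 0 := by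
  rw [gdist, commonPrefix_self]
  ring

theorem wdepth_add_wdepth_mirror {t : BTree} {p : List Bool} (hp : p ∈ positions t) :
    wdepth t p + wdepth (mirror t) (p.map not) = p.length + 1 := by
  have hlabel : ∀ i ∈ Finset.range (p.length + 1),
      labelAt t (p.take i) + labelAt (mirror t) ((p.map not).take i) = 1 := by
    intro i _
    rw [← List.map_take, labelAt_mirror (mem_positions_of_prefix hp (List.take_prefix i p))]
    ring
  rw [wdepth, wdepth, List.length_map, ← Finset.sum_add_distrib, Finset.sum_congr rfl hlabel]
  simp

theorem wdist_add_wdist_mirror {t : BTree} {p q : List Bool} (hp : p ∈ positions t)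
    (hq : q ∈ positions t) :
    wdist t p q + wdist (mirror t) (p.map not) (q.map not) = gdist p q + 1 := by
  have hc := mem_positions_of_prefix hp (commonPrefix_prefix_left p q)
  have hdp := wdepth_add_wdepth_mirror hp
  have hdq := wdepth_add_wdepth_mirror hq
  have hdc := wdepth_add_wdepth_mirror hc
  rw [wdist, wdist, gdist, commonPrefix_map_not, labelAt_mirror hc]
  linear_combination hdp + hdq - 2 * hdc

theorem sum_map_positions_const (t : BTree) (c : ℝ) :
    ((positions t).map fun _ => c).sum = size t * c := by
  simp [length_positions]

theorem wpl_add_wpl_mirror (t : BTree) : wpl t + wpl (mirror t) = pl t + size t := by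
  rw [wpl, wpl, pl, sum_map_positions_mirror, ← List.sum_map_add,
    List.map_congr_left fun _ hp => wdepth_add_wdepth_mirror hp, List.sum_map_add,
    sum_map_positions_const, mul_one]

theorem wWiener_add_wWiener_mirror (t : BTree) :
    wWiener t + wWiener (mirror t) = wiener t + size t * (size t + 1) / 2 := by
  have hpairs : ∀ p ∈ positions t,
      ((positions t).map fun q => wdist t p q).sum
        + ((positions t).map fun q => wdist (mirror t) (p.map not) (q.map not)).sum
      = ((positions t).map fun q => gdist p q).sum + size t := by
    intro p hp
    rw [← List.sum_map_add, List.map_congr_left fun _ hq => wdist_add_wdist_mirror hp hq,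
      List.sum_map_add, sum_map_positions_const, mul_one]
  have hdiag : ∀ p ∈ positions t, wdist t p p + wdist (mirror t) (p.map not) (p.map not) = 1 := by
    intro p hp
    rw [wdist_add_wdist_mirror hp hp, gdist_self, zero_add]
  simp only [wWiener, wiener, sum_map_positions_mirror]
  rw [← add_div, ← add_div, add_add_add_comm, ← List.sum_map_add, ← List.sum_map_add,
    List.map_congr_left hpairs, List.map_congr_left hdiag, List.sum_map_add,
    sum_map_positions_const, sum_map_positions_const]
  ring

end BTree

open BTree in
theorem reflection_identities_general (n : ℕ) (u : List ℝ) (hlen : u.length = n)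
    (hnodup : u.Nodup) :
    wpl (bstOfList u) + wpl (bstOfList (u.map fun y => 1 - y)) = pl (bstOfList u) + n ∧
    wWiener (bstOfList u) + wWiener (bstOfList (u.map fun y => 1 - y))
      = wiener (bstOfList u) + (n : ℝ) * ((n : ℝ) + 1) / 2 := by
  rw [bstOfList_map_one_sub hnodup, ← hlen, ← size_bstOfList u]
  exact ⟨wpl_add_wpl_mirror _, wWiener_add_wWiener_mirror _⟩

open BTree in
/-- reflection identities.  Let `u_1,…,u_n` be pairwise distinct reals
in `(0,1)`, `T` the binary search tree built by successively inserting `u_1,…,u_n` and `T*`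
the one built from `1−u_1,…,1−u_n`.  Then `𝐩(T) + 𝐩(T*) = p(T) + n` and
`𝐰(T) + 𝐰(T*) = w(T) + n(n+1)/2`. -/
theorem reflection_identities (n : ℕ) (u : List ℝ) (hlen : u.length = n)
    (hnodup : u.Nodup) (hmem : ∀ x ∈ u, x ∈ Set.Ioo (0 : ℝ) 1) :
    wpl (bstOfList u) + wpl (bstOfList (u.map fun y => 1 - y)) = pl (bstOfList u) + n ∧
    wWiener (bstOfList u) + wWiener (bstOfList (u.map fun y => 1 - y))
      = wiener (bstOfList u) + (n : ℝ) * ((n : ℝ) + 1) / 2 :=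
  reflection_identities_general n u hlen hnodup
end
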